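/- arXiv:1511.00422 — 5 statements merged into one kernel-verified Lean document; each statement's English description precedes it below -/
import Mathlib

section
/- For every n ≥ 1 there exists a weakly increasing function M : ℤ^n → ℤ such that (i) M(x + n² eⱼ) = M(x) + n for all x ∈ ℤ^n and all 1 ≤ j ≤ n, and (ii) whenever max_j x_j − min_j x_j ≤ n − 1, we have M(x) = min_j x_j. -/
/-- Pseudo-minimum (Proposition 5.1): for every `n ≥ 1` there is a weakly increasing
`M : ℤ^n → ℤ` with `M(x + n² eⱼ) = M(x) + n` for each coordinate `j`, and
`M(x) = min_j x_j` whenever `max_j x_j − min_j x_j ≤ n − 1`. -/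
theorem pseudo_minimum (n : ℕ) (hn : 1 ≤ n) :
    ∃ M : (Fin n → ℤ) → ℤ, Monotone M ∧
      (∀ (x : Fin n → ℤ) (j : Fin n),
        M (Function.update x j (x j + (n : ℤ) ^ 2)) = M x + n) ∧
      (∀ (x : Fin n → ℤ) (z : ℤ),
        (∀ j, z ≤ x j) → (∃ j, x j = z) → (∀ j, x j ≤ z + n - 1) → M x = z) := by
  have hn1 : (1:ℤ) ≤ (n:ℤ) := by exact_mod_cast hn
  haveI hne : Nonempty (Fin n) := ⟨⟨0, hn⟩⟩
  have huniv : (Finset.univ : Finset (Fin n)).Nonempty := Finset.univ_nonempty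
  set val : (Fin n → ℤ) → (Fin n → ℤ) → ℤ :=
    fun x k => (n:ℤ) * (∑ i, k i)
      + Finset.univ.inf' huniv (fun j => x j - (n:ℤ)^2 * k j) with hval
  -- boundedness
  have hbdd : ∀ x, BddAbove (Set.range (val x)) := by
    intro x
    refine ⟨max (∑ i, x i) 0, ?_⟩
    rintro m ⟨k, rfl⟩
    have h1 : (n:ℤ) * Finset.univ.inf' huniv (fun j => x j - (n:ℤ)^2 * k j)
        ≤ ∑ j, (x j - (n:ℤ)^2 * k j) := by
      have := Finset.card_nsmul_le_sum (Finset.univ : Finset (Fin n))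
        (fun j => x j - (n:ℤ)^2 * k j)
        (Finset.univ.inf' huniv (fun j => x j - (n:ℤ)^2 * k j))
        (fun i _ => Finset.inf'_le _ (Finset.mem_univ i))
      simpa [nsmul_eq_mul, Finset.card_univ] using this
    have h2 : ∑ j, (x j - (n:ℤ)^2 * k j) = (∑ i, x i) - (n:ℤ)^2 * ∑ i, k i := by
      rw [Finset.sum_sub_distrib, ← Finset.mul_sum]
    have h3 : (n:ℤ) * val x k ≤ ∑ i, x i := by
      simp only [hval]
      nlinarith [h1, h2]
    rcases le_or_gt (val x k) 0 with h | h
    · exact le_max_of_le_right h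
    · refine le_max_of_le_left ?_
      nlinarith
  have hnonempty : ∀ x : Fin n → ℤ, (Set.range (val x)).Nonempty :=
    fun x => ⟨val x 0, 0, rfl⟩
  refine ⟨fun x => sSup (Set.range (val x)), ?_, ?_, ?_⟩
  · -- Monotone
    intro x y hxy
    refine csSup_le (hnonempty x) ?_
    rintro m ⟨k, rfl⟩
    have hmono : val x k ≤ val y k := by
      simp only [hval]
      have : Finset.univ.inf' huniv (fun j => x j - (n:ℤ)^2 * k j)
          ≤ Finset.univ.inf' huniv (fun j => y j - (n:ℤ)^2 * k j) := by
        refine Finset.le_inf' _ _ ?_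
        intro j _
        exact le_trans (Finset.inf'_le _ (Finset.mem_univ j)) (by linarith [hxy j])
      linarith
    exact le_trans hmono (le_csSup (hbdd y) ⟨k, rfl⟩)
  · -- Periodicity
    intro x j
    have hkey : ∀ k : Fin n → ℤ,
        val (Function.update x j (x j + (n:ℤ)^2)) k
          = val x (Function.update k j (k j - 1)) + n := by
      intro k
      simp only [hval]
      have hinf : (fun i => Function.update x j (x j + (n:ℤ)^2) i - (n:ℤ)^2 * k i)
          = (fun i => x i - (n:ℤ)^2 * Function.update k j (k j - 1) i) := by
        funext i
        rcases eq_or_ne i j with rfl | hij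
        · simp [Function.update_self]; ring
        · simp [Function.update_of_ne hij]
      rw [hinf]
      have hsum : ∑ i, Function.update k j (k j - 1) i = (∑ i, k i) - 1 := by
        rw [Finset.sum_update_of_mem (Finset.mem_univ j)]
        have : ∑ i ∈ Finset.univ \ {j}, k i = (∑ i, k i) - k j := by
          rw [Finset.sum_sdiff_eq_sub (by simp), Finset.sum_singleton]
        rw [this]; ring
      rw [hsum]; ring
    apply le_antisymm
    · refine csSup_le (hnonempty _) ?_
      rintro m ⟨k, rfl⟩
      rw [hkey k]
      have := le_csSup (hbdd x) (⟨Function.update k j (k j - 1), rfl⟩ :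
        val x (Function.update k j (k j - 1)) ∈ Set.range (val x))
      linarith
    · show sSup (Set.range (val x)) + (n:ℤ)
          ≤ sSup (Set.range (val (Function.update x j (x j + (n:ℤ)^2))))
      rw [← le_sub_iff_add_le]
      refine csSup_le (hnonempty x) ?_
      rintro m ⟨k, rfl⟩
      rw [le_sub_iff_add_le]
      have h1 : val x k + n = val (Function.update x j (x j + (n:ℤ)^2))
          (Function.update k j (k j + 1)) := by
        rw [hkey (Function.update k j (k j + 1))]
        congr 1
        have : Function.update (Function.update k j (k j + 1)) j
            (Function.update k j (k j + 1) j - 1) = k := by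
          funext i
          rcases eq_or_ne i j with rfl | hij
          · simp
          · simp [Function.update_of_ne hij]
        rw [this]
      rw [h1]
      exact le_csSup (hbdd _) ⟨Function.update k j (k j + 1), rfl⟩
  · -- near the diagonal
    intro x z hz ⟨j0, hj0⟩ hub
    apply le_antisymm
    · refine csSup_le (hnonempty x) ?_
      rintro m ⟨k, rfl⟩
      by_contra hcon
      push_neg at hcon
      have hinf : ∀ i : Fin n, z - (n:ℤ) * ∑ i, k i < x i - (n:ℤ)^2 * k i := by
        intro i
        have h1 : Finset.univ.inf' huniv (fun j => x j - (n:ℤ)^2 * k j)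
            ≤ x i - (n:ℤ)^2 * k i := Finset.inf'_le _ (Finset.mem_univ i)
        have h2 : z < val x k := hcon
        simp only [hval] at h2
        linarith
      have hle : ∀ i : Fin n, (n:ℤ) * k i ≤ ∑ i, k i := by
        intro i
        have h1 := hinf i
        have h2 := hub i
        by_contra hcc
        push_neg at hcc
        have : (∑ i, k i) + 1 ≤ (n:ℤ) * k i := hcc
        nlinarith
      have hsum0 : ∑ i, ((∑ i, k i) - (n:ℤ) * k i) = 0 := by
        rw [Finset.sum_sub_distrib, Finset.sum_const, ← Finset.mul_sum,
          Finset.card_univ, Fintype.card_fin, nsmul_eq_mul]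
        ring
      have heq : ∀ i ∈ (Finset.univ : Finset (Fin n)),
          ((∑ i, k i) - (n:ℤ) * k i) = 0 := by
        intro i _
        have := (Finset.sum_eq_zero_iff_of_nonneg
          (fun i _ => sub_nonneg.mpr (hle i))).mp hsum0
        exact this i (Finset.mem_univ i)
      have : z < x j0 := by
        have h1 := hinf j0
        have h2 := heq j0 (Finset.mem_univ j0)
        nlinarith
      omega
    · have h0 : val x 0 = z := by
        simp only [hval]
        simp only [Pi.zero_apply, mul_zero, sub_zero, Finset.sum_const_zero]
        have : Finset.univ.inf' huniv x = z := by
          apply le_antisymm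
          · exact hj0 ▸ Finset.inf'_le _ (Finset.mem_univ j0)
          · exact Finset.le_inf' _ _ (fun i _ => hz i)
        simpa using this
      exact h0 ▸ le_csSup (hbdd x) ⟨0, rfl⟩
end

section
/- Fix n, k ≥ 1. Let F : ℕ^{k−1} × ℕ → ℕ be weakly increasing with F(y, z) ≤ F(y, z+1) ≤ F(y, z) + 1 for all y ∈ ℕ^{k−1}, z ∈ ℕ. Let M : ℤ^n → ℤ satisfy M(x) = min_j x_j whenever max_j x_j − min_j x_j ≤ n−1. For 0 ≤ i ≤ n−1, define z_i(z) = n·⌊(z+n−i−1)/n⌋ + i. Then F(y, z) = M(F(y, z₀(z)), ..., F(y, z_{n−1}(z))) for all y and z. -/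
/-- Interleaving (Lemma 6.4): if `F : ℕ^{k−1} × ℕ → ℕ` is increasing with roughness
at most 1 in the last coordinate, and `M` agrees with the coordinate minimum near
the diagonal, then `F(y,z) = M(F(y,z₀(z)),…,F(y,z_{n−1}(z)))` where
`zᵢ(z) = n⌊(z+n−i−1)/n⌋ + i`. -/
theorem interleaving (n m : ℕ) (hn : 1 ≤ n)
    (F : (Fin m → ℕ) → ℕ → ℕ)
    (hmono : ∀ y y' z z', y ≤ y' → z ≤ z' → F y z ≤ F y' z')
    (hrough : ∀ y z, F y z ≤ F y (z + 1) ∧ F y (z + 1) ≤ F y z + 1)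
    (M : (Fin n → ℤ) → ℤ)
    (hM : ∀ (x : Fin n → ℤ) (w : ℤ),
      (∀ j, w ≤ x j) → (∃ j, x j = w) → (∀ j, x j ≤ w + n - 1) → M x = w) :
    ∀ y z, (F y z : ℤ) =
      M (fun i => (F y (n * ((z + n - (i : ℕ) - 1) / n) + i) : ℤ)) := by
  intro y z
  have key : ∀ i : ℕ, i < n → z ≤ n * ((z + n - i - 1) / n) + i ∧
      n * ((z + n - i - 1) / n) + i ≤ z + n - 1 := by
    intro i hi
    have h1 := Nat.div_add_mod (z + n - i - 1) n
    have h2 := Nat.mod_lt (z + n - i - 1) (by omega : 0 < n)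
    omega
  have hex : n * ((z + n - (z % n) - 1) / n) + z % n = z := by
    have hr : z % n < n := Nat.mod_lt z (by omega)
    have h1 := Nat.div_add_mod z n
    have heq : z + n - z % n - 1 = n * (z / n) + (n - 1) := by omega
    rw [heq, Nat.mul_add_div (by omega), Nat.div_eq_of_lt (by omega : n - 1 < n),
      Nat.add_zero]
    exact Nat.div_add_mod z n
  have hstep : ∀ d, F y (z + d) ≤ F y z + d := by
    intro d; induction d with
    | zero => simp
    | succ d ih =>
        have h := (hrough y (z + d)).2
        have he : z + (d + 1) = z + d + 1 := rfl
        rw [he]; omega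
  refine (hM _ (F y z) ?_ ?_ ?_).symm
  · intro j
    have h := key j j.isLt
    exact_mod_cast hmono y y z _ le_rfl h.1
  · refine ⟨⟨z % n, Nat.mod_lt z (by omega)⟩, ?_⟩
    simp only [hex]
  · intro j
    have h := key j j.isLt
    have h2 := hstep (n * ((z + n - (j : ℕ) - 1) / n) + j - z)
    have hz : z + (n * ((z + n - (j : ℕ) - 1) / n) + j - z) =
        n * ((z + n - (j : ℕ) - 1) / n) + j := by omega
    rw [hz] at h2
    have : F y (n * ((z + n - (j : ℕ) - 1) / n) + j) ≤ F y z + (n - 1) := by omega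
    omega
end

section
/- Suppose F : ℕ^k → ℕ satisfies F(0) = 0, is weakly increasing, F = L + P with L linear and P eventually periodic, and in the last coordinate F(y, z + L₀) = F(y, z) + S·L₀ for all y and all z ≥ R (period L₀, slope S, margin R), with S > 0. Let n = ⌊R/(W L₀)⌋ · W · L₀ where W = sup_{(y,z)} (F(y,z+1) − F(y,z)) ≥ 1 is assumed finite, and suppose n ≥ max(R, S·L₀) and S·n ∈ ℕ. For 0 ≤ j ≤ Sn − 1 define F_j = ⌊(F + j)/(Sn)⌋. Then F = Σ_{j=0}^{Sn−1} F_j, each F_j is weakly increasing with F_j(0) = 0, each F_j satisfies F_j(y, z+1) − F_j(y, z) ∈ {0,1} for all y, z, and F_j(y, z+n) = F_j(y, z) + 1 for all y and z ≥ n. -/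
/-!
Since `∑_{j<N} ⌊(x + j)/N⌋ = x` for every natural `x` (Hermite's identity), the `F_j` sum to `F`,
and each `F_j = ⌊(F + j)/N⌋` inherits monotonicity from `F`. Iterating the periodicity of `F`
`⌊R/(W L₀)⌋ · W` times shows `F(y, z + n) = F(y, z) + N` for `z ≥ n`, so every `F_j` grows by
exactly one over such a step. Monotonicity makes `S·L₀` a positive integer, so
`N = ⌊R/(W L₀)⌋ · W · S L₀ ≥ W` exceeds every unit step of `F`, and each `F_j` moves by at most one
per unit step.
-/

open Finset

namespace Nat

theorem sum_range_add_div {N : ℕ} (hN : 0 < N) (x : ℕ) :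
    ∑ j ∈ range N, (x + j) / N = x := by
  induction x with
  | zero => exact sum_eq_zero fun j hj => by simpa using Nat.div_eq_of_lt (mem_range.mp hj)
  | succ x ih =>
    have shift := sum_range_succ' (fun j => (x + j) / N) N
    rw [sum_range_succ, ih, Nat.add_div_right x hN] at shift
    simp only [add_zero, ← add_assoc] at shift
    simp only [add_right_comm x 1]
    omega

theorem div_eq_or_eq_succ_of_le_of_le_add {N a b : ℕ} (hN : 0 < N) (hab : a ≤ b)
    (hb : b ≤ a + N) : b / N = a / N ∨ b / N = a / N + 1 := by
  have lower : a / N ≤ b / N := Nat.div_le_div_right hab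
  have upper : b / N ≤ a / N + 1 := Nat.add_div_right a hN ▸ Nat.div_le_div_right hb
  omega

end Nat

theorem apply_add_mul_eq_add_nsmul {M : Type*} [AddMonoid M] {f : ℕ → M} {R p : ℕ} {s : M}
    (h : ∀ z, R ≤ z → f (z + p) = f z + s) (t : ℕ) {z : ℕ} (hz : R ≤ z) :
    f (z + t * p) = f z + t • s := by
  induction t with
  | zero => simp
  | succ t ih =>
    rw [add_mul, one_mul, ← add_assoc, h _ (by omega), ih, succ_nsmul, add_assoc]

theorem exists_nat_slope {α : Type*} {F : α → ℕ → ℕ} {L₀ R : ℕ} {a : ℚ} (y₀ : α)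
    (hmono : Monotone (F y₀)) (hper : ∀ y z, R ≤ z → (F y (z + L₀) : ℚ) = F y z + a) :
    ∃ s : ℕ, (s : ℚ) = a ∧ ∀ y z, R ≤ z → F y (z + L₀) = F y z + s := by
  have hs : ((F y₀ (R + L₀) - F y₀ R : ℕ) : ℚ) = a := by
    rw [Nat.cast_sub (hmono (by omega)), hper y₀ R le_rfl]
    ring
  refine ⟨_, hs, fun y z hz => ?_⟩
  have h := hper y z hz
  rw [← hs] at h
  exact_mod_cast h

theorem meagerization_case_one_general (m : ℕ) (F : (Fin m → ℕ) → ℕ → ℕ)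
    (h00 : F 0 0 = 0)
    (hmono : ∀ y y' z z', y ≤ y' → z ≤ z' → F y z ≤ F y' z')
    -- period L₀, slope S > 0, margin R in the last coordinate
    (L₀ R : ℕ) (hL₀ : 0 < L₀) (S : ℚ) (hS : 0 < S)
    (hper : ∀ y z, R ≤ z → (F y (z + L₀) : ℚ) = (F y z : ℚ) + S * L₀)
    -- roughness W
    (W : ℕ) (hW : ∀ y z, F y (z + 1) ≤ F y z + W)
    -- n and N = S·n
    (n : ℕ) (hn : n = R / (W * L₀) * W * L₀)
    (hnR : R ≤ n) (hnSL : S * L₀ ≤ (n : ℚ))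
    (N : ℕ) (hN : (N : ℚ) = S * n) :
    (∀ y z, F y z = ∑ j ∈ Finset.range N, (F y z + j) / N) ∧
    (∀ j, j < N → (F 0 0 + j) / N = 0) ∧
    (∀ j y y' z z', y ≤ y' → z ≤ z' → (F y z + j) / N ≤ (F y' z' + j) / N) ∧
    (∀ j y z, (F y (z + 1) + j) / N = (F y z + j) / N ∨
      (F y (z + 1) + j) / N = (F y z + j) / N + 1) ∧
    (∀ j y z, n ≤ z → (F y (z + n) + j) / N = (F y z + j) / N + 1) := by
  obtain ⟨s, hs, hperN⟩ := exists_nat_slope 0 (fun z z' hz => hmono 0 0 z z' le_rfl hz) hper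
  set q := R / (W * L₀)
  have hs_pos : 0 < s := by exact_mod_cast hs ▸ (by positivity : (0 : ℚ) < S * L₀)
  have hn_pos : 0 < n := by exact_mod_cast (by positivity : (0 : ℚ) < S * L₀).trans_le hnSL
  obtain ⟨hq_pos, hW_pos⟩ : 0 < q ∧ 0 < W := by
    rw [hn] at hn_pos
    exact CanonicallyOrderedAdd.mul_pos.mp (Nat.pos_of_mul_pos_right hn_pos)
  have hN_eq : N = q * W * s := by
    exact_mod_cast (by rw [hN, hn, hs]; push_cast; ring : (N : ℚ) = q * W * s)
  have hN_pos : 0 < N := hN_eq ▸ by positivity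
  have hW_le : W ≤ N := hN_eq ▸ calc
    W = 1 * W * 1 := by ring
    _ ≤ q * W * s := by gcongr <;> omega
  have hshift : ∀ y z, n ≤ z → F y (z + n) = F y z + N := fun y z hz => by
    rw [hN_eq, hn, mul_assoc q W s, ← mul_assoc, ← smul_eq_mul (q * W) s]
    exact apply_add_mul_eq_add_nsmul (hperN y) (q * W) (hnR.trans hz)
  refine ⟨fun y z => (Nat.sum_range_add_div hN_pos _).symm, fun j hj => ?_,
    fun j y y' z z' hy hz => Nat.div_le_div_right (Nat.add_le_add_right (hmono y y' z z' hy hz) j),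
    fun j y z => Nat.div_eq_or_eq_succ_of_le_of_le_add hN_pos ?_ ?_, fun j y z hz => ?_⟩
  · rw [h00, zero_add]
    exact Nat.div_eq_of_lt hj
  · exact Nat.add_le_add_right (hmono y y z (z + 1) le_rfl (by omega)) j
  · have := hW y z
    omega
  · rw [hshift y z hz, add_right_comm, Nat.add_div_right _ hN_pos]

/-- Meagerization reduction (Case 1 in the proof of Theorem 1.1): with
`n = ⌊R/(WL₀)⌋·W·L₀` and `N = S·n ∈ ℕ`, setting `F_j = ⌊(F+j)/N⌋`, we get
`F = ∑_{j<N} F_j`, each `F_j` is increasing, zero at zero, has roughness at most 1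
in the last coordinate, and satisfies `F_j(y, z+n) = F_j(y, z) + 1` for `z ≥ n`. -/
theorem meagerization_case_one (m : ℕ) (F : (Fin m → ℕ) → ℕ → ℕ)
    (h00 : F 0 0 = 0)
    (hmono : ∀ y y' z z', y ≤ y' → z ≤ z' → F y z ≤ F y' z')
    -- F = L + P with L linear and P eventually periodic
    (b : Fin m → ℚ) (c : ℚ) (P : (Fin m → ℕ) → ℕ → ℚ)
    (hdec : ∀ y z, (F y z : ℚ) = ∑ i, b i * (y i : ℚ) + c * z + P y z)
    (lam : Fin m → ℕ) (lamz : ℕ) (r : Fin m → ℕ) (rz : ℕ)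
    (hlam : ∀ i, 0 < lam i) (hlamz : 0 < lamz)
    (hPy : ∀ (i : Fin m) y z, r i ≤ y i →
      P (Function.update y i (y i + lam i)) z = P y z)
    (hPz : ∀ y z, rz ≤ z → P y (z + lamz) = P y z)
    -- period L₀, slope S > 0, margin R in the last coordinate
    (L₀ R : ℕ) (hL₀ : 0 < L₀) (S : ℚ) (hS : 0 < S)
    (hper : ∀ y z, R ≤ z → (F y (z + L₀) : ℚ) = (F y z : ℚ) + S * L₀)
    -- roughness W
    (W : ℕ) (hW1 : 1 ≤ W) (hW : ∀ y z, F y (z + 1) ≤ F y z + W)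
    -- n and N = S·n
    (n : ℕ) (hn : n = R / (W * L₀) * W * L₀)
    (hnR : R ≤ n) (hnSL : S * L₀ ≤ (n : ℚ))
    (N : ℕ) (hN : (N : ℚ) = S * n) :
    (∀ y z, F y z = ∑ j ∈ Finset.range N, (F y z + j) / N) ∧
    (∀ j, j < N → (F 0 0 + j) / N = 0) ∧
    (∀ j y y' z z', y ≤ y' → z ≤ z' → (F y z + j) / N ≤ (F y' z' + j) / N) ∧
    (∀ j y z, (F y (z + 1) + j) / N = (F y z + j) / N ∨
      (F y (z + 1) + j) / N = (F y z + j) / N + 1) ∧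
    (∀ j y z, n ≤ z → (F y (z + n) + j) / N = (F y z + j) / N + 1) :=
  meagerization_case_one_general m F h00 hmono L₀ R hL₀ S hS hper W hW n hn hnR hnSL N hN
end

section
/- Let f : ℕ^k → ℕ satisfy f(0) = 0, f weakly increasing, f = L + P with L(x) = b·x linear and P periodic with lattice of periodicity containing λ_k e_k, and suppose f is meager in the last coordinate: f(x + λ_k e_k) = f(x) + 1 for all x ∈ ℕ^k. Extend f = L + P to all of ℤ^k. Define g(x₁,...,x_{k−1}) = −c − min{ x_k ∈ ℤ : f(x₁,...,x_k) ≥ 0 }, where c = −min{ x_k ∈ ℤ : f(0,...,0,x_k) ≥ 0 }. Then 0 ≤ c < λ_k, g is weakly increasing with g(0) = 0, and f(x₁,...,x_k) = ⌊(g(x₁,...,x_{k−1}) + x_k + c)/λ_k⌋ for all (x₁,...,x_k) ∈ ℕ^k. -/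
/-!
Fix `y` and view `u = f y` as a weakly increasing map `ℤ → ℤ` that gains exactly `1` per
step of `λₖ`. Such a map is a staircase: if `M` is the least `z` with `u z ≥ 0`, then
`u (M + r) = 0` for `0 ≤ r < λₖ`, since `u (M - 1) < 0` and one period later `u` has gained
only `1`; hence `u z = ⌊(z - M) / λₖ⌋` on all of `ℤ`. With `c = -M(0)` and
`g y = M(0) - M(y)` this is the claimed formula, `g` is monotone because raising `y` raises
`f y` and so lowers `M(y)`, and `0 ≤ c < λₖ` because `f 0 0 = 0` while `f 0 (-λₖ) = -1`.
-/

namespace Meager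

variable {u : ℤ → ℤ} {n : ℕ}

theorem period_pos (hu : ∀ z, u (z + n) = u z + 1) : 0 < n := by
  by_contra! h
  have := hu 0
  simp_all

theorem apply_add_mul (hu : ∀ z, u (z + n) = u z + 1) (z k : ℤ) :
    u (z + k * n) = u z + k := by
  induction k using Int.induction_on with
  | zero => simp
  | succ k ih => rw [add_one_mul, ← add_assoc, hu, ih]; ring
  | pred k ih =>
    have h := hu (z + (-k - 1) * n)
    rw [show z + (-k - 1) * n + n = z + -k * n by ring, ih] at h
    omega

theorem exists_isLeast (hu : ∀ z, u (z + n) = u z + 1) (hmono : Monotone u) :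
    ∃ M, IsLeast {z | 0 ≤ u z} M := by
  have hbdd : ∀ z ∈ {z | 0 ≤ u z}, -(u 0 + 1) * n ≤ z := by
    intro z hz
    by_contra! hlt
    have h := hmono hlt.le
    rw [← zero_add (-(u 0 + 1) * n), apply_add_mul hu] at h
    have : 0 ≤ u z := hz
    omega
  have hne : 0 + -u 0 * n ∈ {z | 0 ≤ u z} := by
    rw [Set.mem_ofPred_eq, apply_add_mul hu]; simp
  exact Int.exists_least_of_bdd ⟨_, hbdd⟩ ⟨_, hne⟩

theorem isLeast_le_of_le {v : ℤ → ℤ} {M N : ℤ} (hM : IsLeast {z | 0 ≤ u z} M)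
    (hN : IsLeast {z | 0 ≤ v z} N) (huv : ∀ z, u z ≤ v z) : N ≤ M :=
  hN.2 (hM.1.trans (huv M))

theorem apply_eq_ediv (hu : ∀ z, u (z + n) = u z + 1) (hmono : Monotone u) {M : ℤ}
    (hM : IsLeast {z | 0 ≤ u z} M) (z : ℤ) : u z = (z - M) / n := by
  have hn : (0 : ℤ) < n := by exact_mod_cast period_pos hu
  set r := (z - M) % n
  have hr_nonneg : 0 ≤ r := Int.emod_nonneg _ hn.ne'
  have hr_lt : r < n := Int.emod_lt_of_pos _ hn
  have hbelow : u (M - 1) < 0 := by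
    by_contra! h
    linarith [hM.2 h]
  have hstep : u (M + r) = 0 := by
    have hlo : u M ≤ u (M + r) := hmono (by omega)
    have hhi : u (M + r) ≤ u (M - 1 + n) := hmono (by omega)
    have hM_mem : 0 ≤ u M := hM.1
    rw [hu] at hhi
    omega
  calc u z = u (M + r + (z - M) / n * n) := by
        congr 1; linarith [Int.emod_add_ediv_mul (z - M) n]
    _ = (z - M) / n := by rw [apply_add_mul hu, hstep, zero_add]

theorem apply_eq_floor_div (hu : ∀ z, u (z + n) = u z + 1) (hmono : Monotone u) {M : ℤ}
    (hM : IsLeast {z | 0 ≤ u z} M) (z : ℤ) : u z = ⌊((z - M : ℤ) : ℚ) / n⌋ := by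
  rw [Rat.floor_intCast_div_natCast, apply_eq_ediv hu hmono hM]

end Meager

theorem meager_reduction_general (m : ℕ) (f : (Fin m → ℤ) → ℤ → ℤ)
    (h0 : f 0 0 = 0)
    (hmono : ∀ y y' z z', y ≤ y' → z ≤ z' → f y z ≤ f y' z')
    (lamk : ℕ)
    -- meagerness in the last coordinate
    (hmeager : ∀ y z, f y (z + lamk) = f y z + 1) :
    ∃ (c : ℤ) (g : (Fin m → ℤ) → ℤ),
      IsLeast {z : ℤ | 0 ≤ f 0 z} (-c) ∧
      0 ≤ c ∧ c < lamk ∧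
      (∀ y, IsLeast {z : ℤ | 0 ≤ f y z} (-c - g y)) ∧
      Monotone g ∧ g 0 = 0 ∧
      (∀ (y : Fin m → ℤ) (z : ℤ), 0 ≤ y → 0 ≤ z →
        f y z = ⌊((g y + z + c : ℤ) : ℚ) / (lamk : ℚ)⌋) := by
  have hmono_z : ∀ y, Monotone (f y) := fun y _ _ hz => hmono y y _ _ le_rfl hz
  choose M hM using fun y => Meager.exists_isLeast (hmeager y) (hmono_z y)
  have hneg : f 0 (0 + -1 * lamk) = -1 := by
    rw [Meager.apply_add_mul (hmeager 0), h0]; rfl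
  refine ⟨-M 0, fun y => M 0 - M y, by simpa using hM 0, ?_, ?_, fun y => ?_, ?_, sub_self _,
    fun y z _ _ => ?_⟩
  · linarith [(hM 0).2 (h0.ge : 0 ≤ f 0 0)]
  · by_contra! h
    have := hmono_z 0 (show M 0 ≤ 0 + -1 * lamk by omega)
    linarith [show 0 ≤ f 0 (M 0) from (hM 0).1]
  · simpa using hM y
  · intro y y' hy
    have := Meager.isLeast_le_of_le (hM y) (hM y') fun z => hmono y y' z z hy le_rfl
    simp only
    omega
  · rw [Meager.apply_eq_floor_div (hmeager y) (hmono_z y) (hM y) z]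
    congr 3
    ring

/-- Core of Lemma 4.3: let `f : ℤ^{k−1} × ℤ → ℤ` be the extension of a meager ZILP
function (meager in the last coordinate: `f(x + λₖeₖ) = f(x) + 1`). With
`c = −min{z : f(0,z) ≥ 0}` and `g(y) = −c − min{z : f(y,z) ≥ 0}`, we have
`0 ≤ c < λₖ`, `g` is increasing with `g(0) = 0`, and
`f(y,z) = ⌊(g(y) + z + c)/λₖ⌋` on `ℕ^k`. -/
theorem meager_reduction (m : ℕ) (f : (Fin m → ℤ) → ℤ → ℤ)
    (h0 : f 0 0 = 0)
    (hmono : ∀ y y' z z', y ≤ y' → z ≤ z' → f y z ≤ f y' z')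
    (lamk : ℕ) (hlamk : 0 < lamk)
    -- f = L + P with L(x) = b·y + bₖz and P periodic (lattice containing λₖ eₖ)
    (b : Fin m → ℚ) (bk : ℚ) (P : (Fin m → ℤ) → ℤ → ℚ)
    (hdec : ∀ y z, (f y z : ℚ) = ∑ i, b i * (y i : ℚ) + bk * z + P y z)
    (lam : Fin m → ℕ) (hlam : ∀ i, 0 < lam i)
    (hPy : ∀ (i : Fin m) y z, P (Function.update y i (y i + lam i)) z = P y z)
    (hPz : ∀ y z, P y (z + lamk) = P y z)
    -- meagerness in the last coordinate
    (hmeager : ∀ y z, f y (z + lamk) = f y z + 1) :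
    ∃ (c : ℤ) (g : (Fin m → ℤ) → ℤ),
      IsLeast {z : ℤ | 0 ≤ f 0 z} (-c) ∧
      0 ≤ c ∧ c < lamk ∧
      (∀ y, IsLeast {z : ℤ | 0 ≤ f y z} (-c - g y)) ∧
      Monotone g ∧ g 0 = 0 ∧
      (∀ (y : Fin m → ℤ) (z : ℤ), 0 ≤ y → 0 ≤ z →
        f y z = ⌊((g y + z + c : ℤ) : ℚ) / (lamk : ℚ)⌋) :=
  meager_reduction_general m f h0 hmono lamk hmeager
end

section
/- Let f : ℕ^k → ℕ satisfy f(0) = 0, f weakly increasing, f = L + P with L linear and P periodic, and f(x + λ_k e_k) = f(x) + m for all x (where m = λ_k b_k is a positive integer). For 0 ≤ j ≤ m−1 define f_j(x) = ⌊(f(x) + j)/m⌋. Then f = Σ_{j=0}^{m−1} f_j, and each f_j satisfies f_j(x + λ_k e_k) = f_j(x) + 1 for all x ∈ ℕ^k (i.e., each f_j is meager in the last coordinate). -/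
open Finset

/-- Hermite's identity, in `ℕ`. -/
theorem Nat.sum_range_add_div_s19 {m : ℕ} (hm : 0 < m) (n : ℕ) :
    ∑ j ∈ range m, (n + j) / m = n := by
  induction n with
  | zero => exact sum_eq_zero fun j hj => Nat.div_eq_of_lt (by simpa using hj)
  | succ n ih =>
    -- Passing from `n` to `n + 1` trades the term `n / m` for `(n + m) / m = n / m + 1`.
    have shift := (sum_range_succ' (fun j => (n + j) / m) m).symm.trans
      (sum_range_succ (fun j => (n + j) / m) m)
    rw [Nat.add_zero, ih, Nat.add_div_right n hm] at shift
    simp only [Nat.add_right_comm n 1, Nat.add_assoc n]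
    omega

theorem reduction_to_meager_general (d : ℕ) (f : (Fin d → ℕ) → ℕ → ℕ)
    (lamk : ℕ)
    (m : ℕ) (hm : 0 < m)
    (hstep : ∀ y z, f y (z + lamk) = f y z + m) :
    (∀ y z, f y z = ∑ j ∈ Finset.range m, (f y z + j) / m) ∧
    (∀ j y z, (f y (z + lamk) + j) / m = (f y z + j) / m + 1) := by
  refine ⟨fun y z => (Nat.sum_range_add_div_s19 hm _).symm, fun j y z => ?_⟩
  rw [hstep, Nat.add_right_comm, Nat.add_div_right _ hm]

/-- Lemma 4.2 (reduction to the meager case): if `f` is ZILP and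
`f(x + λₖeₖ) = f(x) + m` with `m = λₖbₖ` a positive integer, then setting
`f_j(x) = ⌊(f(x)+j)/m⌋`, we have `f = ∑_{j<m} f_j` and each `f_j` is meager in the
last coordinate: `f_j(x + λₖeₖ) = f_j(x) + 1`. -/
theorem reduction_to_meager (d : ℕ) (f : (Fin d → ℕ) → ℕ → ℕ)
    (h0 : f 0 0 = 0)
    (hmono : ∀ y y' z z', y ≤ y' → z ≤ z' → f y z ≤ f y' z')
    (lamk : ℕ) (hlamk : 0 < lamk)
    -- f = L + P with L linear (last coefficient bₖ) and P periodic
    (b : Fin d → ℚ) (bk : ℚ) (P : (Fin d → ℕ) → ℕ → ℚ)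
    (hdec : ∀ y z, (f y z : ℚ) = ∑ i, b i * (y i : ℚ) + bk * z + P y z)
    (lam : Fin d → ℕ) (hlam : ∀ i, 0 < lam i)
    (hPy : ∀ (i : Fin d) y z, P (Function.update y i (y i + lam i)) z = P y z)
    (hPz : ∀ y z, P y (z + lamk) = P y z)
    (m : ℕ) (hm : 0 < m) (hmbk : (m : ℚ) = lamk * bk)
    (hstep : ∀ y z, f y (z + lamk) = f y z + m) :
    (∀ y z, f y z = ∑ j ∈ Finset.range m, (f y z + j) / m) ∧
    (∀ j y z, (f y (z + lamk) + j) / m = (f y z + j) / m + 1) :=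
  reduction_to_meager_general d f lamk m hm hstep
end
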